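/- arXiv:2307.00030 — 2 statements merged into one kernel-verified Lean document; each statement's English description precedes it below -/
import Mathlib

section
/- Let L ∈ ℝ^{N×N} with L·1 = 0 and a(L) = min{xᵀLx : x⊥1, ‖x‖=1}. Let M be a symmetric n×n matrix. Then for any e ∈ ℝ^{Nn} whose blocks e_i ∈ ℝ^n satisfy Σ_i M e_i = 0 (i.e., (I_N ⊗ M)e ⊥ range(1_N ⊗ I_n)), one has eᵀ(L ⊗ (MᵀM))e ≥ a(L) · eᵀ(I_N ⊗ (MᵀM))e. -/
open Matrix BigOperators Kronecker

lemma expand_kron {N n : ℕ} (B : Matrix (Fin N) (Fin N) ℝ)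
    (M : Matrix (Fin n) (Fin n) ℝ) (e : Fin N × Fin n → ℝ) :
    e ⬝ᵥ (B ⊗ₖ (Mᵀ * M)).mulVec e
      = ∑ k : Fin n, (fun i => M.mulVec (fun j => e (i, j)) k) ⬝ᵥ
          B.mulVec (fun i => M.mulVec (fun j => e (i, j)) k) := by
  simp only [dotProduct, mulVec, Matrix.mul_apply, kroneckerMap_apply, transpose_apply,
    Fintype.sum_prod_type, Finset.sum_mul, Finset.mul_sum]
  conv_lhs => enter [2,x,2,x1,2,x2]; rw [Finset.sum_comm]
  conv_lhs => enter [2,x,2,x1]; rw [Finset.sum_comm]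
  conv_lhs => enter [2,x]; rw [Finset.sum_comm]
  conv_lhs => rw [Finset.sum_comm]
  conv_rhs => enter [2,x,2,x1,2,x2]; rw [Finset.sum_comm]
  conv_rhs => enter [2,x,2,x1]; rw [Finset.sum_comm]
  apply Finset.sum_congr rfl; intros
  apply Finset.sum_congr rfl; intros
  apply Finset.sum_congr rfl; intros
  apply Finset.sum_congr rfl; intros
  apply Finset.sum_congr rfl; intros
  ring

lemma quad_lb {N : ℕ} {L : Matrix (Fin N) (Fin N) ℝ} {aL : ℝ}
    (haL : IsLeast {r : ℝ | ∃ x : Fin N → ℝ,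
      (∑ i, x i) = 0 ∧ x ⬝ᵥ x = 1 ∧ r = x ⬝ᵥ L.mulVec x} aL)
    (x : Fin N → ℝ) (hx : (∑ i, x i) = 0) :
    aL * (x ⬝ᵥ x) ≤ x ⬝ᵥ L.mulVec x := by
  rcases eq_or_ne x 0 with rfl | hne
  · simp
  · have hs : 0 < x ⬝ᵥ x := by
      have h0 : x ⬝ᵥ x ≠ 0 := fun h => hne (by
        funext i
        have := Finset.sum_eq_zero_iff_of_nonneg (fun i _ => mul_self_nonneg (x i)) |>.mp h i
          (Finset.mem_univ i)
        have := mul_self_eq_zero.mp this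
        simp [this])
      exact lt_of_le_of_ne (Finset.sum_nonneg fun i _ => mul_self_nonneg (x i)) (Ne.symm h0)
    set s := Real.sqrt (x ⬝ᵥ x) with hsdef
    have hspos : 0 < s := Real.sqrt_pos.mpr hs
    have hss : s * s = x ⬝ᵥ x := Real.mul_self_sqrt hs.le
    have hmem : aL ≤ (s⁻¹ • x) ⬝ᵥ L.mulVec (s⁻¹ • x) := by
      apply haL.2
      refine ⟨s⁻¹ • x, ?_, ?_, rfl⟩
      · simp only [Pi.smul_apply, smul_eq_mul, ← Finset.mul_sum, hx, mul_zero]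
      · rw [smul_dotProduct, dotProduct_smul, smul_eq_mul, smul_eq_mul, ← mul_assoc,
          ← mul_inv, hss]
        field_simp
    have hrw : (s⁻¹ • x) ⬝ᵥ L.mulVec (s⁻¹ • x) = (s*s)⁻¹ * (x ⬝ᵥ L.mulVec x) := by
      rw [mulVec_smul, smul_dotProduct, dotProduct_smul, smul_eq_mul, smul_eq_mul, ← mul_assoc,
        mul_inv]
    rw [hrw, hss] at hmem
    have h2 := mul_le_mul_of_nonneg_right hmem hs.le
    have h3 : (x ⬝ᵥ x)⁻¹ * (x ⬝ᵥ L.mulVec x) * (x ⬝ᵥ x) = x ⬝ᵥ L.mulVec x := by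
      field_simp
    rw [h3] at h2
    linarith

/-- Let `L·1 = 0` with algebraic connectivity `a(L)`, and `M` a symmetric n×n matrix.
For any `e ∈ ℝ^{Nn}` whose blocks `e_i` satisfy `Σ_i M e_i = 0`, one has
`eᵀ(L ⊗ MᵀM)e ≥ a(L) · eᵀ(I_N ⊗ MᵀM)e`. -/
theorem stmt_7 {N n : ℕ}
    (L : Matrix (Fin N) (Fin N) ℝ)
    (hL1 : L.mulVec (fun _ => (1 : ℝ)) = 0)
    (aL : ℝ)
    (haL : IsLeast {r : ℝ | ∃ x : Fin N → ℝ,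
      (∑ i, x i) = 0 ∧ x ⬝ᵥ x = 1 ∧ r = x ⬝ᵥ L.mulVec x} aL)
    (M : Matrix (Fin n) (Fin n) ℝ) (hM : M.IsSymm)
    (e : Fin N × Fin n → ℝ)
    (he : (∑ i : Fin N, M.mulVec (fun j => e (i, j))) = 0) :
    aL * (e ⬝ᵥ ((1 : Matrix (Fin N) (Fin N) ℝ) ⊗ₖ (Mᵀ * M)).mulVec e)
      ≤ e ⬝ᵥ (L ⊗ₖ (Mᵀ * M)).mulVec e := by
  rw [expand_kron, expand_kron, Finset.mul_sum]
  apply Finset.sum_le_sum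
  intro k _
  have hsum : (∑ i, M.mulVec (fun j => e (i, j)) k) = 0 := by
    have := congrFun he k
    simpa using this
  have h := quad_lb haL (fun i => M.mulVec (fun j => e (i, j)) k) hsum
  simpa [Matrix.one_mulVec] using h
end

section
/- Let P be symmetric positive definite, and L, D symmetric matrices with L·1=0, and D diagonal with PD + DP positive semidefinite. If e ∈ ℝ^{Nn} with blocks e_i summing to zero under ((PD+DP)/2)^{1/2}, then −eᵀ(L ⊗ PD)e ≤ −a(L)·eᵀ(I_N ⊗ PD)e, where eᵀ(L⊗PD)e is interpreted via its symmetrization eᵀ(L ⊗ (PD+DP)/2)e. -/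
open Matrix BigOperators Kronecker



lemma dot_kron {N n : ℕ} (A : Matrix (Fin N) (Fin N) ℝ) (S : Matrix (Fin n) (Fin n) ℝ)
    (e : Fin N × Fin n → ℝ) :
    e ⬝ᵥ (A ⊗ₖ S).mulVec e
      = ∑ i, ∑ j, A i j * ((fun k => e (i,k)) ⬝ᵥ S.mulVec (fun k => e (j,k))) := by
  simp only [dotProduct, mulVec, kroneckerMap_apply, Fintype.sum_prod_type,
    Finset.mul_sum]
  refine Finset.sum_congr rfl fun i _ => ?_
  rw [Finset.sum_comm]
  exact Finset.sum_congr rfl fun j _ => Finset.sum_congr rfl fun k _ =>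
    Finset.sum_congr rfl fun l _ => by ring

lemma key {N : ℕ} (L : Matrix (Fin N) (Fin N) ℝ) (aL : ℝ)
    (haL : IsLeast {r : ℝ | ∃ x : Fin N → ℝ,
      (∑ i, x i) = 0 ∧ x ⬝ᵥ x = 1 ∧ r = x ⬝ᵥ L.mulVec x} aL)
    (x : Fin N → ℝ) (hx : (∑ i, x i) = 0) :
    aL * (x ⬝ᵥ x) ≤ x ⬝ᵥ L.mulVec x := by
  rcases eq_or_ne (x ⬝ᵥ x) 0 with h0 | h0
  · have hx0 : x = 0 := dotProduct_self_eq_zero.mp h0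
    simp [hx0]
  · have hnn : 0 ≤ x ⬝ᵥ x :=
      Finset.sum_nonneg fun i _ => mul_self_nonneg _
    have hpos : 0 < x ⬝ᵥ x := lt_of_le_of_ne hnn (Ne.symm h0)
    set c := Real.sqrt (x ⬝ᵥ x) with hc
    have hcpos : 0 < c := Real.sqrt_pos.mpr hpos
    have hc2 : c * c = x ⬝ᵥ x := Real.mul_self_sqrt hpos.le
    set u := c⁻¹ • x with hu
    have hmem : (u ⬝ᵥ L.mulVec u) ∈ {r : ℝ | ∃ x : Fin N → ℝ,
        (∑ i, x i) = 0 ∧ x ⬝ᵥ x = 1 ∧ r = x ⬝ᵥ L.mulVec x} := by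
      refine ⟨u, ?_, ?_, rfl⟩
      · simp [hu, ← Finset.mul_sum, hx]
      · have : u ⬝ᵥ u = (c⁻¹ * c⁻¹) * (x ⬝ᵥ x) := by
          simp [hu, smul_dotProduct, dotProduct_smul, smul_eq_mul]; ring
        rw [this, ← hc2]
        field_simp
    have hle := haL.2 hmem
    have huLu : u ⬝ᵥ L.mulVec u = (c⁻¹ * c⁻¹) * (x ⬝ᵥ L.mulVec x) := by
      simp [hu, smul_dotProduct, dotProduct_smul, mulVec_smul, smul_eq_mul]; ring
    rw [huLu] at hle
    have h2 := mul_le_mul_of_nonneg_left hle (by positivity : (0:ℝ) ≤ c * c)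
    calc aL * (x ⬝ᵥ x) = (c * c) * aL := by rw [hc2]; ring
      _ ≤ (c * c) * ((c⁻¹ * c⁻¹) * (x ⬝ᵥ L.mulVec x)) := h2
      _ = x ⬝ᵥ L.mulVec x := by field_simp


/-- Let `P` be symmetric positive definite, `D` nonnegative diagonal with `PD + DP`
positive semidefinite, and `L·1 = 0` with `a(L) ≥ 0`. If `e ∈ ℝ^{Nn}` has blocks `e_i`
summing to zero under `M = ((PD+DP)/2)^{1/2}`, then
`−eᵀ(L ⊗ PD)e ≤ −a(L)·eᵀ(I_N ⊗ PD)e`, where `eᵀ(L⊗PD)e` is interpreted via its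
symmetrization `eᵀ(L ⊗ (PD+DP)/2)e`. -/
theorem stmt_8 {N n : ℕ}
    (P : Matrix (Fin n) (Fin n) ℝ) (hP : P.PosDef)
    (d : Fin n → ℝ) (hd : ∀ i, 0 ≤ d i)
    (L : Matrix (Fin N) (Fin N) ℝ)
    (hL1 : L.mulVec (fun _ => (1 : ℝ)) = 0)
    (aL : ℝ) (haL0 : 0 ≤ aL)
    (haL : IsLeast {r : ℝ | ∃ x : Fin N → ℝ,
      (∑ i, x i) = 0 ∧ x ⬝ᵥ x = 1 ∧ r = x ⬝ᵥ L.mulVec x} aL)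
    (hPD : (P * Matrix.diagonal d + Matrix.diagonal d * P).PosSemidef)
    (M : Matrix (Fin n) (Fin n) ℝ) (hMsymm : M.IsSymm)
    (hMsqrt : M * M = (1 / 2 : ℝ) • (P * Matrix.diagonal d + Matrix.diagonal d * P))
    (e : Fin N × Fin n → ℝ)
    (he : (∑ i : Fin N, M.mulVec (fun j => e (i, j))) = 0) :
    -(e ⬝ᵥ (L ⊗ₖ ((1 / 2 : ℝ) •
          (P * Matrix.diagonal d + Matrix.diagonal d * P))).mulVec e)
      ≤ -(aL * (e ⬝ᵥ ((1 : Matrix (Fin N) (Fin N) ℝ) ⊗ₖ ((1 / 2 : ℝ) •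
          (P * Matrix.diagonal d + Matrix.diagonal d * P))).mulVec e)) := by
  rw [neg_le_neg_iff, ← hMsqrt]
  set y : Fin N → Fin n → ℝ := fun i => M.mulVec (fun j => e (i, j)) with hy
  have hdotS : ∀ i j : Fin N,
      ((fun k => e (i,k)) ⬝ᵥ (M * M).mulVec (fun k => e (j,k))) = y i ⬝ᵥ y j := by
    intro i j
    rw [← mulVec_mulVec, dotProduct_mulVec, hy]
    congr 1
    funext k
    simp only [vecMul, mulVec, dotProduct]
    refine Finset.sum_congr rfl fun l _ => ?_
    rw [mul_comm, ← hMsymm.apply l k]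
  have hLside : e ⬝ᵥ (L ⊗ₖ (M * M)).mulVec e
      = ∑ k, (fun i => y i k) ⬝ᵥ L.mulVec (fun i => y i k) := by
    rw [dot_kron]
    simp only [hdotS]
    simp only [dotProduct, mulVec, Finset.mul_sum]
    rw [show (∑ i, ∑ j, ∑ k, L i j * (y i k * y j k))
        = ∑ i, ∑ k, ∑ j, L i j * (y i k * y j k) from
      Finset.sum_congr rfl fun i _ => Finset.sum_comm]
    rw [Finset.sum_comm]
    exact Finset.sum_congr rfl fun k _ => Finset.sum_congr rfl fun i _ =>
      Finset.sum_congr rfl fun j _ => by ring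
  have hIside : e ⬝ᵥ ((1 : Matrix (Fin N) (Fin N) ℝ) ⊗ₖ (M * M)).mulVec e
      = ∑ k, (fun i => y i k) ⬝ᵥ (fun i => y i k) := by
    rw [dot_kron]
    simp only [hdotS]
    simp only [one_apply, ite_mul, one_mul, zero_mul, Finset.sum_ite_eq, Finset.mem_univ,
      if_true]
    simp only [dotProduct]
    exact Finset.sum_comm
  rw [hLside, hIside, Finset.mul_sum]
  refine Finset.sum_le_sum fun k _ => ?_
  refine key L aL haL _ ?_
  have h := congrFun he k
  simpa [hy, Finset.sum_apply] using h
end
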